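/- arXiv:2509.12018 — 2 statements merged into one kernel-verified Lean document; each statement's English description precedes it below -/
import Mathlib

section
/- Let φ: ℝ → ℝ be Lipschitz and bounded below. Then for every x ∈ ℝ and every real u > Mφ(x) there exists λ₀ > 0 such that M^{λ₀}φ(x) ≤ u. Consequently, for every x ∈ ℝ, M^λφ(x) → Mφ(x) as λ → 0⁺. -/
open MeasureTheory ProbabilityTheory Real Filter
open scoped Classical

noncomputable section

/-- The Gaussian measure `Φ_x` on `ℝ` with mean `-x` and variance `1`. -/
def Phi (x : ℝ) : Measure ℝ := gaussianReal (-x) 1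

/-- Extended-real value of `∫ f dμ`: the Bochner integral when `f` is integrable,
and `+∞` otherwise (the appropriate convention for functions bounded below). -/
def eInt (f : ℝ → ℝ) (μ : Measure ℝ) : EReal :=
  if Integrable f μ then ((∫ ξ, f ξ ∂μ : ℝ) : EReal) else ⊤

/-- Kullback–Leibler divergence `D_KL(μ‖ν) = ∫ log (dμ/dν) dμ`, equal to `+∞` if `μ` is
not absolutely continuous with respect to `ν` (or if the integral does not exist). -/
def klDiv' (μ ν : Measure ℝ) : EReal :=
  if μ ≪ ν ∧ Integrable (fun ξ => Real.log ((μ.rnDeriv ν ξ).toReal)) μ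
  then ((∫ ξ, Real.log ((μ.rnDeriv ν ξ).toReal) ∂μ : ℝ) : EReal) else ⊤

/-- The randomized nonlocal operator `M^λ`. -/
def Mlam (l : ℝ → ℝ) (lam : ℝ) (φ : ℝ → ℝ) (x : ℝ) : EReal :=
  ⨅ μ : {μ : Measure ℝ // IsProbabilityMeasure μ ∧ μ ≪ Phi x},
    eInt (fun ξ => φ (x + ξ) + l ξ) μ.1 + (lam : EReal) * klDiv' μ.1 (Phi x)

/-- The classical nonlocal operator `M`. -/
def Mcl (l : ℝ → ℝ) (φ : ℝ → ℝ) (x : ℝ) : ℝ := ⨅ ξ : ℝ, (φ (x + ξ) + l ξ)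

/-- `φ` is bounded from below. -/
def BddBelowFun (φ : ℝ → ℝ) : Prop := ∃ m : ℝ, ∀ y, m ≤ φ y

/-- `φ` is of polynomial growth. -/
def PolyGrowth (φ : ℝ → ℝ) : Prop :=
  ∃ β : ℝ, 0 ≤ β ∧ ∃ C : ℝ, ∀ y : ℝ, |φ y| ≤ C * (1 + |y| ^ β)

/-- The standing hypotheses on the intervention cost `l`. -/
structure CostHyp (l : ℝ → ℝ) (K Ll : ℝ) : Prop where
  K_pos : 0 < K
  l_zero : l 0 = K
  l_lb : ∀ x, K ≤ l x
  l_subadd : ∀ x y, l (x + y) + K ≤ l x + l y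
  l_coercive : Filter.Tendsto l (Filter.cocompact ℝ) Filter.atTop
  Ll_pos : 0 < Ll
  l_lip : ∀ x y, |l x - l y| ≤ Ll * |x - y|

/-!
Gibbs' inequality makes the entropy penalty nonnegative, so `Mφ(x) ≤ M^λφ(x)`, and `M^λφ(x)` is
monotone in `λ`. Conversely, if `φ(x + ξ₀) + l(ξ₀) < u`, continuity keeps the cost below some
`v < u` on a small ball `B` around `ξ₀`. Conditioning `Φ_x` on `B` gives a competitor whose
expected cost is at most `v` and whose divergence from `Φ_x` is the finite number
`-log Φ_x(B)`, so for small `λ` the penalty fits into `u - v`.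
-/

open InformationTheory Set Topology

instance (x : ℝ) : IsProbabilityMeasure (Phi x) := by
  unfold Phi; infer_instance

lemma continuous_of_abs_sub_le_mul {f : ℝ → ℝ} {L : ℝ} (hf : ∀ a b, |f a - f b| ≤ L * |a - b|) :
    Continuous f :=
  (LipschitzWith.of_dist_le' hf).continuous

lemma eInt_of_integrable {f : ℝ → ℝ} {μ : Measure ℝ} (hf : Integrable f μ) :
    eInt f μ = ((∫ ξ, f ξ ∂μ : ℝ) : EReal) :=
  if_pos hf

lemma le_eInt_of_forall_le {f : ℝ → ℝ} {μ : Measure ℝ} [IsProbabilityMeasure μ] {c : ℝ}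
    (hf : ∀ ξ, c ≤ f ξ) : (c : EReal) ≤ eInt f μ := by
  unfold eInt
  split_ifs with hint
  · exact EReal.coe_le_coe_iff.2 <| by
      simpa using integral_mono (integrable_const c) hint hf
  · exact le_top

lemma eInt_cond_le_of_forall_le {ν : Measure ℝ} [IsFiniteMeasure ν] {s : Set ℝ}
    (hs : MeasurableSet s) (hs0 : ν s ≠ 0) {f : ℝ → ℝ} (hf : IntegrableOn f s ν) {v : ℝ}
    (hfv : ∀ ξ ∈ s, f ξ ≤ v) : eInt f ν[|s] ≤ v := by
  have := cond_isProbabilityMeasure (s := s) hs0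
  have hint : Integrable f ν[|s] := hf.smul_measure (ENNReal.inv_ne_top.2 hs0)
  rw [eInt_of_integrable hint, EReal.coe_le_coe_iff]
  simpa using integral_mono_ae hint (integrable_const v) ((ae_cond_mem hs).mono hfv)

lemma klDiv'_nonneg (μ ν : Measure ℝ) [IsProbabilityMeasure μ] [IsProbabilityMeasure ν] :
    0 ≤ klDiv' μ ν := by
  unfold klDiv'
  split_ifs with h
  · exact EReal.coe_nonneg.2 <| by
      simpa [llr_def] using integral_llr_add_sub_measure_univ_nonneg h.1 h.2
  · exact le_top

lemma rnDeriv_cond_ae_eq {ν : Measure ℝ} [IsFiniteMeasure ν] {s : Set ℝ} (hs : MeasurableSet s) :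
    ν[|s].rnDeriv ν =ᵐ[ν[|s]] fun _ ↦ (ν s)⁻¹ := by
  rcases eq_or_ne (ν s) 0 with hs0 | hs0
  · simp [cond_eq_zero_of_meas_eq_zero hs0, Filter.EventuallyEq]
  have hsmul : ν[|s].rnDeriv ν =ᵐ[ν] (ν s)⁻¹ • (ν.restrict s).rnDeriv ν :=
    Measure.rnDeriv_smul_left_of_ne_top _ _ (ENNReal.inv_ne_top.2 hs0)
  filter_upwards [cond_absolutelyContinuous.ae_le hsmul,
    cond_absolutelyContinuous.ae_le (Measure.rnDeriv_restrict_self ν hs), ae_cond_mem hs]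
    with ξ h₁ h₂ hξ
  simp [h₁, h₂, hξ]

lemma klDiv'_cond {ν : Measure ℝ} [IsFiniteMeasure ν] {s : Set ℝ} (hs : MeasurableSet s) :
    klDiv' ν[|s] ν = ((-Real.log (ν.real s) : ℝ) : EReal) := by
  have hllr : (fun ξ ↦ Real.log (ν[|s].rnDeriv ν ξ).toReal) =ᵐ[ν[|s]]
      fun _ ↦ -Real.log (ν.real s) := by
    filter_upwards [rnDeriv_cond_ae_eq hs] with ξ hξ
    rw [hξ, ENNReal.toReal_inv, Real.log_inv, measureReal_def]
  unfold klDiv'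
  rw [if_pos ⟨cond_absolutelyContinuous, (integrable_const _).congr hllr.symm⟩,
    integral_congr_ae hllr]
  rcases eq_or_ne (ν s) 0 with hs0 | hs0
  · simp [cond_eq_zero_of_meas_eq_zero hs0, measureReal_def, hs0]
  have := cond_isProbabilityMeasure (s := s) hs0
  simp

lemma EReal.exists_pos_add_mul_le {a : EReal} {u : ℝ} (hau : a < u) (c : ℝ) :
    ∃ lam : ℝ, 0 < lam ∧ a + lam * c ≤ u := by
  obtain ⟨v, hav, hvu⟩ := EReal.lt_iff_exists_real_btwn.1 hau
  rw [EReal.coe_lt_coe_iff] at hvu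
  refine ⟨(u - v) / (|c| + 1), by positivity, ?_⟩
  have hlam : (u - v) / (|c| + 1) * c ≤ u - v := by
    rw [div_mul_eq_mul_div, div_le_iff₀ (by positivity)]
    nlinarith [le_abs_self c]
  calc a + ((u - v) / (|c| + 1) : ℝ) * (c : EReal)
      ≤ v + ((u - v) / (|c| + 1) : ℝ) * (c : EReal) := by gcongr
    _ ≤ u := by exact_mod_cast (by linarith : v + (u - v) / (|c| + 1) * c ≤ u)

lemma exists_closedBall_eInt_cond_lt {ν : Measure ℝ} [IsFiniteMeasure ν] (hν : volume ≪ ν)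
    {f : ℝ → ℝ} (hf : Continuous f) {ξ₀ u : ℝ} (hu : f ξ₀ < u) :
    ∃ δ > 0, ν (Metric.closedBall ξ₀ δ) ≠ 0 ∧ eInt f ν[|Metric.closedBall ξ₀ δ] < u := by
  obtain ⟨v, hfv, hvu⟩ := exists_between hu
  obtain ⟨δ, hδ, hball⟩ := Metric.nhds_basis_closedBall.eventually_iff.1
    (hf.continuousAt.eventually_lt continuousAt_const hfv)
  have hν0 : ν (Metric.closedBall ξ₀ δ) ≠ 0 := fun h ↦
    hδ.not_ge (by simpa [Real.volume_closedBall] using hν h)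
  refine ⟨δ, hδ, hν0, ?_⟩
  calc eInt f ν[|Metric.closedBall ξ₀ δ] ≤ v :=
        eInt_cond_le_of_forall_le measurableSet_closedBall hν0
          (hf.continuousOn.integrableOn_compact (isCompact_closedBall ξ₀ δ))
          fun ξ hξ ↦ (hball hξ).le
    _ < u := EReal.coe_lt_coe_iff.2 hvu

lemma Mlam_le {l φ : ℝ → ℝ} {lam x : ℝ} {μ : Measure ℝ} [IsProbabilityMeasure μ]
    (hμ : μ ≪ Phi x) :
    Mlam l lam φ x ≤ eInt (fun ξ ↦ φ (x + ξ) + l ξ) μ + lam * klDiv' μ (Phi x) :=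
  iInf_le_of_le ⟨μ, inferInstance, hμ⟩ le_rfl

lemma Mcl_le_Mlam {l φ : ℝ → ℝ} {lam x : ℝ} (hlam : 0 ≤ lam)
    (hbdd : BddBelow (range fun ξ ↦ φ (x + ξ) + l ξ)) : (Mcl l φ x : EReal) ≤ Mlam l lam φ x := by
  refine le_iInf fun ⟨μ, _, _⟩ ↦ ?_
  calc (Mcl l φ x : EReal) = Mcl l φ x + 0 := (add_zero _).symm
    _ ≤ _ := add_le_add (le_eInt_of_forall_le (ciInf_le hbdd))
        (EReal.mul_nonneg (EReal.coe_nonneg.2 hlam) (klDiv'_nonneg μ _))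

lemma Mlam_mono (l φ : ℝ → ℝ) (x : ℝ) : Monotone fun lam ↦ Mlam l lam φ x :=
  fun _ _ hle ↦ iInf_mono fun ⟨μ, _, _⟩ ↦ add_le_add le_rfl
    (mul_le_mul_of_nonneg_right (EReal.coe_le_coe_iff.2 hle) (klDiv'_nonneg μ _))

lemma exists_Mlam_le_of_Mcl_lt {l φ : ℝ → ℝ} (hφ : Continuous φ) (hl : Continuous l) {x u : ℝ}
    (hu : Mcl l φ x < u) : ∃ lam : ℝ, 0 < lam ∧ Mlam l lam φ x ≤ u := by
  obtain ⟨ξ₀, hξ₀⟩ := exists_lt_of_ciInf_lt hu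
  obtain ⟨δ, -, hν0, hlt⟩ := exists_closedBall_eInt_cond_lt (ν := Phi x)
    (gaussianReal_absolutelyContinuous' (-x) one_ne_zero) (f := fun ξ ↦ φ (x + ξ) + l ξ)
    (by fun_prop) hξ₀
  obtain ⟨lam, hlam, hle⟩ :=
    EReal.exists_pos_add_mul_le hlt (-Real.log ((Phi x).real (Metric.closedBall ξ₀ δ)))
  have := cond_isProbabilityMeasure hν0
  exact ⟨lam, hlam, (Mlam_le cond_absolutelyContinuous).trans <|
    by rwa [klDiv'_cond measurableSet_closedBall]⟩

lemma tendsto_nhdsGT_zero_of_monotone {g : ℝ → EReal} (hg : Monotone g) {a : ℝ}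
    (hlow : ∀ lam, 0 < lam → (a : EReal) ≤ g lam)
    (hup : ∀ u : ℝ, a < u → ∃ lam : ℝ, 0 < lam ∧ g lam ≤ u) :
    Tendsto g (𝓝[>] 0) (𝓝 a) := by
  convert hg.tendsto_nhdsGT 0
  refine le_antisymm (le_sInf <| forall_mem_image.2 hlow) ?_
  refine EReal.le_of_forall_lt_iff_le.1 fun u hu ↦ ?_
  obtain ⟨lam, hlam, hle⟩ := hup u (EReal.coe_lt_coe_iff.1 hu)
  exact sInf_le_of_le (mem_image_of_mem g hlam) hle

/-- for every `x` and every `u > Mφ(x)` there is `λ₀ > 0` with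
`M^{λ₀}φ(x) ≤ u`; consequently `M^λφ(x) → Mφ(x)` as `λ → 0⁺`. -/
theorem stmt_12 (l : ℝ → ℝ) (K Ll : ℝ) (hl : CostHyp l K Ll)
    (φ : ℝ → ℝ) (hφlip : ∃ Lφ : ℝ, ∀ a b, |φ a - φ b| ≤ Lφ * |a - b|)
    (hφb : BddBelowFun φ) :
    (∀ x u : ℝ, Mcl l φ x < u → ∃ lam₀ : ℝ, 0 < lam₀ ∧ Mlam l lam₀ φ x ≤ (u : EReal)) ∧
    (∀ x : ℝ, Filter.Tendsto (fun lam : ℝ => Mlam l lam φ x)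
      (nhdsWithin 0 (Set.Ioi 0)) (nhds ((Mcl l φ x : ℝ) : EReal))) := by
  obtain ⟨Lφ, hφ⟩ := hφlip
  obtain ⟨m, hm⟩ := hφb
  have small_lam : ∀ x u : ℝ, Mcl l φ x < u → ∃ lam₀ : ℝ, 0 < lam₀ ∧ Mlam l lam₀ φ x ≤ u :=
    fun x u ↦ exists_Mlam_le_of_Mcl_lt (continuous_of_abs_sub_le_mul hφ)
      (continuous_of_abs_sub_le_mul hl.l_lip)
  refine ⟨small_lam, fun x ↦ tendsto_nhdsGT_zero_of_monotone (Mlam_mono l φ x)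
    (fun lam hlam ↦ Mcl_le_Mlam hlam.le ?_) (small_lam x)⟩
  exact ⟨m + K, forall_mem_range.2 fun ξ ↦ add_le_add (hm _) (hl.l_lb ξ)⟩
end
end

section
/- Let λ > 0, let ψ: ℝ → ℝ be Lipschitz with constant L and bounded below, and let l be Lipschitz with constant L_l. Then the integral I := ∫ exp((L + L_l)|η|/λ) dγ(η) over the standard Gaussian measure γ = N(0,1) is finite, and for every x ∈ ℝ, M^λψ(x) ≥ ψ(0) + l(−x) − λ·log I. -/
open MeasureTheory ProbabilityTheory Real Filter
open scoped Classical

noncomputable section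

/-!
By the Lipschitz bounds, `ψ (x + ξ) + l ξ ≥ ψ 0 + l (-x) - λ g ξ` with
`g ξ = (L + L_l) |x + ξ| / λ ≥ 0`.
The relative-entropy penalty absorbs `λ ∫ g dμ` through the Donsker–Varadhan inequality
`∫ g dμ ≤ D_KL(μ‖ν) + log ∫ exp g dν`, obtained by integrating Young's inequality
`u v ≤ u log u - u + exp v` against `ν` at `u = dμ/dν`. Under `Φ_x` the variable `x + ξ` is standard
Gaussian, so `∫ exp g dΦ_x = I`, which is finite since Gaussians have all exponential moments.
-/

lemma integrable_exp_mul_abs_gaussianReal (c m : ℝ) (v : NNReal) :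
    Integrable (fun η => Real.exp (c * |η|)) (gaussianReal m v) :=
  integrable_exp_mul_abs (X := id) (integrable_exp_mul_gaussianReal c)
    (integrable_exp_mul_gaussianReal (-c))

lemma mul_le_mul_log_sub_add_exp {u : ℝ} (hu : 0 ≤ u) (v : ℝ) :
    u * v ≤ u * Real.log u - u + Real.exp v := by
  rcases hu.eq_or_lt with rfl | hu
  · simp [(Real.exp_pos v).le]
  · have h := Real.log_le_sub_one_of_pos (div_pos (Real.exp_pos v) hu)
    rw [Real.log_div (Real.exp_ne_zero v) hu.ne', Real.log_exp, le_sub_iff_add_le,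
      le_div_iff₀ hu] at h
    nlinarith

lemma integrable_and_integral_le_integral_llr_add_log_integral_exp {α : Type*}
    [MeasurableSpace α] {μ ν : Measure α} [IsProbabilityMeasure μ] [SigmaFinite ν] (hμν : μ ≪ ν)
    (h_llr : Integrable (llr μ ν) μ) {g : α → ℝ} (hg : AEStronglyMeasurable g ν) (hg0 : 0 ≤ g)
    (hg_exp : Integrable (fun x => Real.exp (g x)) ν) :
    Integrable g μ ∧ ∫ x, g x ∂μ ≤ ∫ x, llr μ ν x ∂μ + Real.log (∫ x, Real.exp (g x) ∂ν) := by
  set ρ : α → ℝ := fun x => (μ.rnDeriv ν x).toReal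
  set I := ∫ x, Real.exp (g x) ∂ν
  have : NeZero ν := ⟨fun h => IsProbabilityMeasure.ne_zero μ (by simpa [h] using hμν)⟩
  have hI : 0 < I := integral_exp_pos hg_exp
  have hρ : Integrable ρ ν := Measure.integrable_toReal_rnDeriv
  have hρ_log : Integrable (fun x => ρ x * Real.log (ρ x)) ν :=
    (integrable_rnDeriv_mul_log_iff hμν).mpr h_llr
  -- Young's inequality at `u = ρ x`, `v = g x - log I`.
  set h : α → ℝ := fun x => ρ x * Real.log (ρ x) - ρ x + Real.exp (g x) / I + ρ x * Real.log I
  have h₁ : Integrable (fun x => ρ x * Real.log (ρ x) - ρ x) ν := hρ_log.sub hρ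
  have h₂ : Integrable (fun x => ρ x * Real.log (ρ x) - ρ x + Real.exp (g x) / I) ν :=
    h₁.add (hg_exp.div_const I)
  have h_int : Integrable h ν := h₂.add (hρ.mul_const _)
  have hρg_le : ∀ x, ρ x * g x ≤ h x := fun x => by
    have := mul_le_mul_log_sub_add_exp (u := ρ x) ENNReal.toReal_nonneg (g x - Real.log I)
    rw [Real.exp_sub, Real.exp_log hI] at this
    simp only [h]; linarith
  have hρg : Integrable (fun x => ρ x * g x) ν :=
    h_int.mono' ((Measure.measurable_rnDeriv μ ν).ennreal_toReal.aestronglyMeasurable.mul hg)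
      (ae_of_all _ fun x => by
        rw [Real.norm_eq_abs, abs_of_nonneg (mul_nonneg ENNReal.toReal_nonneg (hg0 x))]
        exact hρg_le x)
  refine ⟨(integrable_toReal_rnDeriv_mul_iff hμν).mp hρg, ?_⟩
  calc ∫ x, g x ∂μ = ∫ x, ρ x * g x ∂ν := (integral_toReal_rnDeriv_mul hμν).symm
    _ ≤ ∫ x, h x ∂ν := integral_mono hρg h_int hρg_le
    _ = ∫ x, llr μ ν x ∂μ + Real.log I := by
      simp only [h]
      rw [integral_add h₂ (hρ.mul_const _), integral_add h₁ (hg_exp.div_const I),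
        integral_sub hρ_log hρ,
        integral_mul_const, integral_div, Measure.integral_toReal_rnDeriv hμν,
        integral_rnDeriv_mul_log hμν, div_self hI.ne']
      simp

lemma sub_mul_log_integral_exp_le_eInt_add_mul_klDiv' {μ ν : Measure ℝ} [IsProbabilityMeasure μ]
    [SigmaFinite ν] {f g : ℝ → ℝ} {a lam : ℝ} (hlam : 0 < lam) (hg : Measurable g) (hg0 : 0 ≤ g)
    (hg_exp : Integrable (fun ξ => Real.exp (g ξ)) ν) (hfg : ∀ ξ, a - lam * g ξ ≤ f ξ) :
    ((a - lam * Real.log (∫ ξ, Real.exp (g ξ) ∂ν) : ℝ) : EReal)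
      ≤ eInt f μ + lam * klDiv' μ ν := by
  by_cases h_kl : μ ≪ ν ∧ Integrable (fun ξ => Real.log ((μ.rnDeriv ν ξ).toReal)) μ
  · obtain ⟨hμν, h_llr⟩ := h_kl
    obtain ⟨hg_int, h_dv⟩ := integrable_and_integral_le_integral_llr_add_log_integral_exp hμν
      h_llr hg.aestronglyMeasurable hg0 hg_exp
    by_cases hf : Integrable f μ
    · rw [eInt, if_pos hf, klDiv', if_pos ⟨hμν, h_llr⟩, ← EReal.coe_mul, ← EReal.coe_add,
        EReal.coe_le_coe_iff]
      have h_mono := integral_mono (f := fun ξ => a - lam * g ξ)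
        ((integrable_const a).sub (hg_int.const_mul lam)) hf hfg
      rw [integral_sub (integrable_const a) (hg_int.const_mul lam), integral_const,
        integral_const_mul, probReal_univ, one_smul] at h_mono
      have h_dv' := mul_le_mul_of_nonneg_left h_dv hlam.le
      simp only [llr_def] at h_dv'
      linarith
    · rw [eInt, if_neg hf, klDiv', if_pos ⟨hμν, h_llr⟩, ← EReal.coe_mul,
        EReal.top_add_of_ne_bot (EReal.coe_ne_bot _)]
      exact le_top
  · have h_ne_bot : eInt f μ ≠ ⊥ := by
      unfold eInt; split_ifs <;> simp
    rw [klDiv', if_neg h_kl, EReal.coe_mul_top_of_pos hlam, EReal.add_top_of_ne_bot h_ne_bot]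
    exact le_top

instance isProbabilityMeasure_Phi (x : ℝ) : IsProbabilityMeasure (Phi x) := by
  unfold Phi; infer_instance

lemma map_add_Phi (x : ℝ) : (Phi x).map (x + ·) = gaussianReal 0 1 := by
  rw [Phi, gaussianReal_map_const_add, neg_add_cancel]

lemma integrable_comp_add_Phi_iff (x : ℝ) (f : ℝ → ℝ) :
    Integrable (fun ξ => f (x + ξ)) (Phi x) ↔ Integrable f (gaussianReal 0 1) := by
  rw [← map_add_Phi x, ← MeasurableEquiv.coe_addLeft, integrable_map_equiv]
  rfl

lemma integral_comp_add_Phi (x : ℝ) (f : ℝ → ℝ) :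
    ∫ ξ, f (x + ξ) ∂Phi x = ∫ η, f η ∂gaussianReal 0 1 := by
  rw [← map_add_Phi x, ← MeasurableEquiv.coe_addLeft, integral_map_equiv]
  rfl

lemma sub_mul_abs_add_le_of_lipschitz {ψ l : ℝ → ℝ} {L Ll : ℝ}
    (hψ : ∀ a b, |ψ a - ψ b| ≤ L * |a - b|) (hl : ∀ a b, |l a - l b| ≤ Ll * |a - b|)
    (x ξ : ℝ) : ψ 0 + l (-x) - (L + Ll) * |x + ξ| ≤ ψ (x + ξ) + l ξ := by
  have hψ' := (le_abs_self _).trans (hψ 0 (x + ξ))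
  have hl' := (le_abs_self _).trans (hl (-x) ξ)
  rw [zero_sub, abs_neg] at hψ'
  rw [← abs_neg, neg_sub, sub_neg_eq_add, add_comm ξ] at hl'
  linarith

theorem stmt_17_general (l : ℝ → ℝ) (K Ll : ℝ) (hl : CostHyp l K Ll)
    (lam : ℝ) (hlam : 0 < lam) (L : ℝ)
    (ψ : ℝ → ℝ) (hψlip : ∀ a b, |ψ a - ψ b| ≤ L * |a - b|) :
    Integrable (fun η => Real.exp ((L + Ll) * |η| / lam)) (gaussianReal 0 1) ∧
    ∀ x : ℝ,
      ((ψ 0 + l (-x)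
          - lam * Real.log (∫ η, Real.exp ((L + Ll) * |η| / lam) ∂(gaussianReal 0 1)) : ℝ) : EReal)
        ≤ Mlam l lam ψ x := by
  have h_int : Integrable (fun η => Real.exp ((L + Ll) * |η| / lam)) (gaussianReal 0 1) := by
    simpa only [div_mul_eq_mul_div] using integrable_exp_mul_abs_gaussianReal ((L + Ll) / lam) 0 1
  refine ⟨h_int, fun x => le_iInf fun ⟨μ, hμ, _⟩ => ?_⟩
  have hL : 0 ≤ L := by simpa using (abs_nonneg _).trans (hψlip 1 0)
  have hg0 : 0 ≤ fun ξ => (L + Ll) * |x + ξ| / lam := fun ξ => by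
    have := hl.Ll_pos
    positivity
  rw [← integral_comp_add_Phi x]
  refine sub_mul_log_integral_exp_le_eInt_add_mul_klDiv' hlam (by fun_prop) hg0
    ((integrable_comp_add_Phi_iff x _).mpr h_int) fun ξ => ?_
  rw [mul_div_cancel₀ _ hlam.ne']
  exact sub_mul_abs_add_le_of_lipschitz hψlip hl.l_lip x ξ

/-- the exponential moment `I = ∫ exp((L+L_l)|η|/λ) dN(0,1)(η)` is finite,
and `M^λψ(x) ≥ ψ(0) + l(−x) − λ log I` for every `x`. -/
theorem stmt_17 (l : ℝ → ℝ) (K Ll : ℝ) (hl : CostHyp l K Ll)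
    (lam : ℝ) (hlam : 0 < lam) (L : ℝ)
    (ψ : ℝ → ℝ) (hψlip : ∀ a b, |ψ a - ψ b| ≤ L * |a - b|) (hψb : BddBelowFun ψ) :
    Integrable (fun η => Real.exp ((L + Ll) * |η| / lam)) (gaussianReal 0 1) ∧
    ∀ x : ℝ,
      ((ψ 0 + l (-x)
          - lam * Real.log (∫ η, Real.exp ((L + Ll) * |η| / lam) ∂(gaussianReal 0 1)) : ℝ) : EReal)
        ≤ Mlam l lam ψ x :=
  stmt_17_general l K Ll hl lam hlam L ψ hψlip
end
end
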